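/- Let A ∈ R^{m×n} with at least two distinct columns, and let F be a proper nonempty face of conv(A) minimizing dist(F, conv(A\F)). Then there exist x, z ∈ Δ_{n−1} with Az ∈ F and Ax ∈ conv(A \ F) such that, setting p = A(x−z)/‖A(x−z)‖, one has Φ(A) = Φ(A,x,z) = max_{s∈S(x), a∈A} ⟨p, s−a⟩ = ‖A(x−z)‖. -/

import Mathlib

open scoped RealInnerProductSpace BigOperators

noncomputable def Amul {m n : ℕ} (A : Matrix (Fin m) (Fin n) ℝ) (x : Fin n → ℝ) :
    EuclideanSpace ℝ (Fin m) := WithLp.toLp 2 (fun i => ∑ j, A i j * x j)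

noncomputable def col {m n : ℕ} (A : Matrix (Fin m) (Fin n) ℝ) (j : Fin n) :
    EuclideanSpace ℝ (Fin m) := WithLp.toLp 2 (fun i => A i j)

def colSet {m n : ℕ} (A : Matrix (Fin m) (Fin n) ℝ) : Set (EuclideanSpace ℝ (Fin m)) :=
  {a | ∃ j, a = col A j}

noncomputable def maxGap {m n : ℕ} (A : Matrix (Fin m) (Fin n) ℝ) (x : Fin n → ℝ)
    (p : EuclideanSpace ℝ (Fin m)) : ℝ :=
  sSup {t | ∃ i j : Fin n, 0 < x i ∧ t = ⟪p, col A i - col A j⟫}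

noncomputable def phi {m n : ℕ} (A : Matrix (Fin m) (Fin n) ℝ) (x z : Fin n → ℝ) : ℝ :=
  sInf {r | ∃ p : EuclideanSpace ℝ (Fin m),
    ⟪p, (‖Amul A x - Amul A z‖)⁻¹ • (Amul A x - Amul A z)⟫ = 1 ∧ r = maxGap A x p}

/-- The facial distance `Φ(A) = min_{x,z ∈ Δ, A(x-z) ≠ 0} Φ(A,x,z)`. -/
noncomputable def phiTotal {m n : ℕ} (A : Matrix (Fin m) (Fin n) ℝ) : ℝ :=
  sInf {r | ∃ x ∈ stdSimplex ℝ (Fin n), ∃ z ∈ stdSimplex ℝ (Fin n),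
    Amul A x - Amul A z ≠ 0 ∧ r = phi A x z}

/-- Euclidean distance between two sets. -/
noncomputable def setDist {m : ℕ} (C D : Set (EuclideanSpace ℝ (Fin m))) : ℝ :=
  sInf {r | ∃ c ∈ C, ∃ d ∈ D, r = dist c d}

lemma Amul_eq_sum {m n : ℕ} (A : Matrix (Fin m) (Fin n) ℝ) (x : Fin n → ℝ) :
    Amul A x = ∑ j, x j • col A j := by
  ext i
  show (∑ j, A i j * x j) = (∑ j, x j • col A j) i
  rw [WithLp.ofLp_sum, Finset.sum_apply]
  exact Finset.sum_congr rfl fun j _ => by simp [col, mul_comm]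

lemma Amul_lin {m n : ℕ} (A : Matrix (Fin m) (Fin n) ℝ) (a b : ℝ) (x y : Fin n → ℝ) :
    Amul A (a • x + b • y) = a • Amul A x + b • Amul A y := by
  ext i
  show (∑ j, A i j * (a * x j + b * y j)) = _
  have : (a • Amul A x + b • Amul A y) i = a * (∑ j, A i j * x j) + b * (∑ j, A i j * y j) := rfl
  rw [this, Finset.mul_sum, Finset.mul_sum, ← Finset.sum_add_distrib]
  exact Finset.sum_congr rfl fun j _ => by ring

lemma inner_Amul {m n : ℕ} (A : Matrix (Fin m) (Fin n) ℝ) (q : EuclideanSpace ℝ (Fin m))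
    (x : Fin n → ℝ) : ⟪q, Amul A x⟫ = ∑ j, x j * ⟪q, col A j⟫ := by
  rw [Amul_eq_sum, inner_sum]
  exact Finset.sum_congr rfl fun j _ => real_inner_smul_right q (col A j) (x j)

-- membership of Amul in hull
lemma mem_hull_of_support {m n : ℕ} (A : Matrix (Fin m) (Fin n) ℝ) {x : Fin n → ℝ}
    (hx : x ∈ stdSimplex ℝ (Fin n)) {s : Set (EuclideanSpace ℝ (Fin m))}
    (h : ∀ j, x j ≠ 0 → col A j ∈ s) : Amul A x ∈ convexHull ℝ s := by
  rw [Amul_eq_sum]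
  rw [show (∑ j, x j • col A j) = ∑ j ∈ Finset.univ.filter (fun j => x j ≠ 0), x j • col A j by
    refine (Finset.sum_subset (Finset.subset_univ _) ?_).symm
    intro j _ hj
    simp only [Finset.mem_filter, Finset.mem_univ, true_and, not_not] at hj
    rw [hj, zero_smul]]
  refine (convex_convexHull ℝ s).sum_mem (fun i _ => hx.1 i) ?_ ?_
  · rw [← hx.2]
    refine Finset.sum_subset (Finset.subset_univ _) ?_
    intro j _ hj
    simpa using not_not.mp (by simpa using hj)
  · intro i hi
    exact subset_convexHull ℝ s (h i (by simpa using hi))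

-- representation lemma
lemma exists_rep {m n : ℕ} (A : Matrix (Fin m) (Fin n) ℝ) {s : Set (EuclideanSpace ℝ (Fin m))}
    (hs : s ⊆ colSet A) {y : EuclideanSpace ℝ (Fin m)} (hy : y ∈ convexHull ℝ s) :
    ∃ x ∈ stdSimplex ℝ (Fin n), (∀ j, x j ≠ 0 → col A j ∈ s) ∧ Amul A x = y := by
  set Im : Set (EuclideanSpace ℝ (Fin m)) :=
    {y | ∃ x ∈ stdSimplex ℝ (Fin n), (∀ j, x j ≠ 0 → col A j ∈ s) ∧ Amul A x = y} with hIm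
  have : convexHull ℝ s ⊆ Im := by
    apply convexHull_min
    · intro a ha
      obtain ⟨j, rfl⟩ := hs ha
      refine ⟨fun x => if j = x then 1 else 0, ite_eq_mem_stdSimplex ℝ j, ?_, ?_⟩
      · intro j' hj'
        rcases eq_or_ne j j' with rfl | hne
        · exact ha
        · exfalso; exact hj' (if_neg hne)
      · rw [Amul_eq_sum]
        rw [Finset.sum_eq_single j]
        · simp
        · intro j' _ hne; rw [if_neg (Ne.symm hne), zero_smul]
        · simp
    · rintro y1 ⟨x1, hx1, hs1, rfl⟩ y2 ⟨x2, hx2, hs2, rfl⟩ a b ha hb hab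
      refine ⟨a • x1 + b • x2, convex_stdSimplex ℝ (Fin n) hx1 hx2 ha hb hab, ?_, ?_⟩
      · intro j hj
        have : a * x1 j ≠ 0 ∨ b * x2 j ≠ 0 := by
          by_contra hc
          push_neg at hc
          exact hj (by simp [Pi.add_apply, Pi.smul_apply, smul_eq_mul, hc.1, hc.2])
        rcases this with h | h
        · exact hs1 j (by intro h0; exact h (by rw [h0, mul_zero]))
        · exact hs2 j (by intro h0; exact h (by rw [h0, mul_zero]))
      · ext i
        show (∑ j, A i j * (a * x1 j + b * x2 j)) = a * (∑ j, A i j * x1 j) + b * (∑ j, A i j * x2 j)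
        rw [Finset.mul_sum, Finset.mul_sum, ← Finset.sum_add_distrib]
        exact Finset.sum_congr rfl fun j _ => by ring
  exact this hy

-- halfspace lemmas
lemma hull_inner_le {m : ℕ} {s : Set (EuclideanSpace ℝ (Fin m))} {q : EuclideanSpace ℝ (Fin m)}
    {B : ℝ} (h : ∀ a ∈ s, ⟪q, a⟫ ≤ B) {y : EuclideanSpace ℝ (Fin m)}
    (hy : y ∈ convexHull ℝ s) : ⟪q, y⟫ ≤ B := by
  have hlin : IsLinearMap ℝ (fun y : EuclideanSpace ℝ (Fin m) => ⟪q, y⟫) :=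
    ⟨fun a b => inner_add_right q a b, fun c a => real_inner_smul_right q a c⟩
  exact convexHull_min h (convex_halfSpace_le hlin B) hy

lemma hull_inner_ge {m : ℕ} {s : Set (EuclideanSpace ℝ (Fin m))} {q : EuclideanSpace ℝ (Fin m)}
    {B : ℝ} (h : ∀ a ∈ s, B ≤ ⟪q, a⟫) {y : EuclideanSpace ℝ (Fin m)}
    (hy : y ∈ convexHull ℝ s) : B ≤ ⟪q, y⟫ := by
  have hlin : IsLinearMap ℝ (fun y : EuclideanSpace ℝ (Fin m) => ⟪q, y⟫) :=
    ⟨fun a b => inner_add_right q a b, fun c a => real_inner_smul_right q a c⟩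
  exact convexHull_min h (convex_halfSpace_ge hlin B) hy

lemma hull_clm_le {m : ℕ} {s : Set (EuclideanSpace ℝ (Fin m))}
    (f : EuclideanSpace ℝ (Fin m) →L[ℝ] ℝ) {B : ℝ} (h : ∀ a ∈ s, f a ≤ B)
    {y : EuclideanSpace ℝ (Fin m)} (hy : y ∈ convexHull ℝ s) : f y ≤ B :=
  convexHull_min h (convex_halfSpace_le ⟨f.map_add, f.map_smul⟩ B) hy

-- average lemma
lemma avg_lemma {ι : Type*} (t : Finset ι) (w c : ι → ℝ) {M : ℝ}
    (hw : ∀ i ∈ t, 0 ≤ w i) (hc : ∀ i ∈ t, c i ≤ M)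
    (hsum : (∑ i ∈ t, w i * c i) = (∑ i ∈ t, w i) * M) :
    ∀ i ∈ t, w i ≠ 0 → c i = M := by
  have h0 : (∑ i ∈ t, w i * (M - c i)) = 0 := by
    have e1 : (∑ i ∈ t, w i * (M - c i)) = (∑ i ∈ t, w i * M) - ∑ i ∈ t, w i * c i := by
      rw [← Finset.sum_sub_distrib]
      exact Finset.sum_congr rfl fun i _ => by ring
    rw [e1, hsum, Finset.sum_mul]
    simp
  intro i hi hwi
  have := (Finset.sum_eq_zero_iff_of_nonneg (fun i hi =>
    mul_nonneg (hw i hi) (sub_nonneg.mpr (hc i hi)))).mp h0 i hi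
  have : M - c i = 0 := by
    rcases mul_eq_zero.mp this with h | h
    · exact absurd h hwi
    · exact h
  linarith

-- projection lemma
lemma proj_lemma {m : ℕ} {C : Set (EuclideanSpace ℝ (Fin m))} (hC : Convex ℝ C)
    (hcomp : IsCompact C) (hne : C.Nonempty) (v : EuclideanSpace ℝ (Fin m)) :
    ∃ π ∈ C, ∀ c ∈ C, ⟪v - π, c - π⟫ ≤ 0 := by
  obtain ⟨π, hπ, hmin⟩ := exists_norm_eq_iInf_of_complete_convex hne
    (hcomp.isClosed.isComplete) hC v
  exact ⟨π, hπ, (norm_eq_iInf_iff_real_inner_le_zero hC hπ).mp hmin⟩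

lemma gapSet_finite {m n : ℕ} (A : Matrix (Fin m) (Fin n) ℝ) (x : Fin n → ℝ)
    (p : EuclideanSpace ℝ (Fin m)) :
    Set.Finite {t | ∃ i j : Fin n, 0 < x i ∧ t = ⟪p, col A i - col A j⟫} := by
  apply Set.Finite.subset (Set.finite_range
    (fun ij : Fin n × Fin n => (⟪p, col A ij.1 - col A ij.2⟫ : ℝ)))
  rintro t ⟨i, j, _, rfl⟩
  exact ⟨(i, j), rfl⟩

lemma le_maxGap {m n : ℕ} (A : Matrix (Fin m) (Fin n) ℝ) {x : Fin n → ℝ}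
    (p : EuclideanSpace ℝ (Fin m)) {i j : Fin n} (hi : 0 < x i) :
    ⟪p, col A i - col A j⟫ ≤ maxGap A x p :=
  le_csSup (Set.Finite.bddAbove (gapSet_finite A x p)) ⟨i, j, hi, rfl⟩

lemma maxGap_le {m n : ℕ} (A : Matrix (Fin m) (Fin n) ℝ) {x : Fin n → ℝ}
    (p : EuclideanSpace ℝ (Fin m)) {B : ℝ} (hne : ∃ i, 0 < x i)
    (h : ∀ i j : Fin n, 0 < x i → ⟪p, col A i - col A j⟫ ≤ B) : maxGap A x p ≤ B := by
  apply csSup_le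
  · obtain ⟨i, hi⟩ := hne; exact ⟨_, i, i, hi, rfl⟩
  · rintro t ⟨i, j, hi, rfl⟩; exact h i j hi

lemma exists_pos_of_simplex {n : ℕ} {x : Fin n → ℝ} (hx : x ∈ stdSimplex ℝ (Fin n)) :
    ∃ i, 0 < x i := by
  by_contra h
  push_neg at h
  have hz : (∑ i, x i) ≤ 0 := Finset.sum_nonpos (fun i _ => h i)
  rw [hx.2] at hz
  linarith

lemma setDist_le {m : ℕ} {C D : Set (EuclideanSpace ℝ (Fin m))} {c d : EuclideanSpace ℝ (Fin m)}
    (hc : c ∈ C) (hd : d ∈ D) : setDist C D ≤ dist c d := by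
  apply csInf_le
  · exact ⟨0, by rintro r ⟨c', _, d', _, rfl⟩; exact dist_nonneg⟩
  · exact ⟨c, hc, d, hd, rfl⟩

lemma le_setDist {m : ℕ} {C D : Set (EuclideanSpace ℝ (Fin m))} {B : ℝ}
    (hC : C.Nonempty) (hD : D.Nonempty) (h : ∀ c ∈ C, ∀ d ∈ D, B ≤ dist c d) :
    B ≤ setDist C D := by
  apply le_csInf
  · obtain ⟨c, hc⟩ := hC; obtain ⟨d, hd⟩ := hD; exact ⟨_, c, hc, d, hd, rfl⟩
  · rintro r ⟨c, hc, d, hd, rfl⟩; exact h c hc d hd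

lemma setDist_attained {m : ℕ} {C D : Set (EuclideanSpace ℝ (Fin m))}
    (hCc : IsCompact C) (hDc : IsCompact D) (hC : C.Nonempty) (hD : D.Nonempty) :
    ∃ c ∈ C, ∃ d ∈ D, dist c d = setDist C D := by
  obtain ⟨⟨c, d⟩, hmem, hmin⟩ := (hCc.prod hDc).exists_isMinOn (hC.prod hD)
    (continuous_dist.continuousOn)
  refine ⟨c, hmem.1, d, hmem.2, le_antisymm ?_ (setDist_le hmem.1 hmem.2)⟩
  refine le_setDist hC hD (fun c' hc' d' hd' => ?_)
  exact isMinOn_iff.mp hmin (c', d') (Set.mk_mem_prod hc' hd')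

lemma exists_convex_rep {E : Type*} [AddCommGroup E] [Module ℝ E] {ι : Type*} [Fintype ι]
    [DecidableEq ι] (v : ι → E) (s : Set ι) {y : E} (hy : y ∈ convexHull ℝ (v '' s)) :
    ∃ μ : ι → ℝ, (∀ i, 0 ≤ μ i) ∧ (∑ i, μ i) = 1 ∧ (∀ i, μ i ≠ 0 → i ∈ s) ∧
      y = ∑ i, μ i • v i := by
  suffices h : convexHull ℝ (v '' s) ⊆ {y : E | ∃ μ : ι → ℝ, (∀ i, 0 ≤ μ i) ∧ (∑ i, μ i) = 1 ∧
      (∀ i, μ i ≠ 0 → i ∈ s) ∧ y = ∑ i, μ i • v i} by exact h hy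
  refine convexHull_min ?_ ?_
  · rintro a ⟨i, hi, rfl⟩
    refine ⟨fun k => if k = i then 1 else 0, fun k => by positivity, by simp, ?_, ?_⟩
    · intro k hk
      rcases eq_or_ne k i with rfl | hne
      · exact hi
      · exact absurd (if_neg hne) hk
    · rw [Finset.sum_eq_single i]
      · simp
      · intro k _ hne; simp only [if_neg hne, zero_smul]
      · simp
  · rintro y1 ⟨μ1, h1n, h1s, h1m, rfl⟩ y2 ⟨μ2, h2n, h2s, h2m, rfl⟩ a b ha hb hab
    refine ⟨fun i => a * μ1 i + b * μ2 i,
      fun i => add_nonneg (mul_nonneg ha (h1n i)) (mul_nonneg hb (h2n i)), ?_, ?_, ?_⟩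
    · rw [Finset.sum_add_distrib, ← Finset.mul_sum, ← Finset.mul_sum, h1s, h2s]
      simpa
    · intro i hi
      by_cases h1 : μ1 i = 0
      · by_cases h2 : μ2 i = 0
        · exact absurd (show (fun i => a * μ1 i + b * μ2 i) i = 0 by
            simp only [h1, h2, mul_zero, add_zero]) hi
        · exact h2m i h2
      · exact h1m i h1
    · rw [Finset.smul_sum, Finset.smul_sum, ← Finset.sum_add_distrib]
      exact Finset.sum_congr rfl fun i _ => by rw [add_smul, mul_smul, mul_smul]


lemma avg_lemma_ge {ι : Type*} (t : Finset ι) (w c : ι → ℝ) {M : ℝ}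
    (hw : ∀ i ∈ t, 0 ≤ w i) (hc : ∀ i ∈ t, M ≤ c i)
    (hsum : (∑ i ∈ t, w i * c i) = (∑ i ∈ t, w i) * M) :
    ∀ i ∈ t, w i ≠ 0 → c i = M := by
  intro i hi hwi
  have h := avg_lemma t w (fun i => -c i) (M := -M) hw (fun i hi => neg_le_neg (hc i hi))
    (by
      have e1 : (∑ i ∈ t, w i * -c i) = -∑ i ∈ t, w i * c i := by
        rw [← Finset.sum_neg_distrib]
        exact Finset.sum_congr rfl fun i _ => by ring
      rw [e1, hsum]; ring) i hi hwi
  have : -c i = -M := h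
  linarith

lemma min_pair_inner' {V : Type*} [NormedAddCommGroup V] [InnerProductSpace ℝ V]
    {K : Set V} (hK : Convex ℝ K) {a b : V} (hb : b ∈ K)
    (hmin : ∀ w ∈ K, ‖a - b‖ ≤ ‖a - w‖) : ∀ w ∈ K, ⟪a - b, w - b⟫ ≤ 0 := by
  haveI : Nonempty K := ⟨⟨b, hb⟩⟩
  have h : ‖a - b‖ = ⨅ w : K, ‖a - w‖ := by
    refine le_antisymm (le_ciInf fun w => hmin w w.2) ?_
    have hbdd : BddBelow (Set.range fun w : K => ‖a - ↑w‖) := by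
      refine ⟨0, ?_⟩
      rintro r ⟨w, rfl⟩
      exact norm_nonneg _
    exact ciInf_le hbdd ⟨b, hb⟩
  exact (norm_eq_iInf_iff_real_inner_le_zero hK hb).mp h

lemma min_pair_inner {m : ℕ} {K : Set (EuclideanSpace ℝ (Fin m))} (hK : Convex ℝ K)
    {a b : EuclideanSpace ℝ (Fin m)} (hb : b ∈ K)
    (hmin : ∀ w ∈ K, ‖a - b‖ ≤ ‖a - w‖) : ∀ w ∈ K, ⟪a - b, w - b⟫ ≤ 0 :=
  min_pair_inner' hK hb hmin

lemma clm_Amul {m n : ℕ} (A : Matrix (Fin m) (Fin n) ℝ)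
    (f : EuclideanSpace ℝ (Fin m) →L[ℝ] ℝ) (x : Fin n → ℝ) :
    f (Amul A x) = ∑ j, x j * f (col A j) := by
  rw [Amul_eq_sum, map_sum]
  exact Finset.sum_congr rfl fun j _ => by rw [map_smul, smul_eq_mul]

set_option maxHeartbeats 1000000 in
lemma part3 {m n : ℕ} (A : Matrix (Fin m) (Fin n) ℝ)
    (F : Set (EuclideanSpace ℝ (Fin m)))
    (hFmin : ∀ G : Set (EuclideanSpace ℝ (Fin m)),
      IsExposed ℝ (convexHull ℝ (colSet A)) G → G.Nonempty →
      G ≠ convexHull ℝ (colSet A) →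
      setDist F (convexHull ℝ (colSet A \ F)) ≤ setDist G (convexHull ℝ (colSet A \ G)))
    {x' z' : Fin n → ℝ} (hx' : x' ∈ stdSimplex ℝ (Fin n)) (hz' : z' ∈ stdSimplex ℝ (Fin n))
    (hw : Amul A x' - Amul A z' ≠ 0) (p : EuclideanSpace ℝ (Fin m))
    (hp : ⟪p, (‖Amul A x' - Amul A z'‖)⁻¹ • (Amul A x' - Amul A z')⟫ = 1) :
    setDist F (convexHull ℝ (colSet A \ F)) ≤ maxGap A x' p := by
  classical
  set w : EuclideanSpace ℝ (Fin m) := Amul A x' - Amul A z' with hwdef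
  set r : ℝ := ‖w‖ with hrdef
  have hr : 0 < r := norm_pos_iff.mpr hw
  set u : EuclideanSpace ℝ (Fin m) := r⁻¹ • w with hudef
  have hu1 : ‖u‖ = 1 := by
    rw [hudef, norm_smul, norm_inv, norm_norm, ← hrdef, inv_mul_cancel₀ (ne_of_gt hr)]
  have hpu : ⟪p, u⟫ = 1 := hp
  have hpw : ⟪p, w⟫ = r := by
    have h1 : r⁻¹ * ⟪p, w⟫ = 1 := by
      rw [← real_inner_smul_right p w r⁻¹]; exact hpu
    have h2 := congrArg (fun t : ℝ => r * t) h1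
    simp only [mul_one] at h2
    rw [← mul_assoc, mul_inv_cancel₀ (ne_of_gt hr), one_mul] at h2
    exact h2
  set δ : ℝ := maxGap A x' p with hδdef
  obtain ⟨i₀, hi₀⟩ := exists_pos_of_simplex hx'
  have hgen : ∀ i j : Fin n, 0 < x' i → ⟪p, col A i - col A j⟫ ≤ δ :=
    fun i j hi => le_maxGap A p hi
  set a : Fin n → ℝ := fun j => ⟪p, col A j⟫ with hadef
  have hinner_sub : ∀ i j : Fin n, ⟪p, col A i - col A j⟫ = a i - a j := by
    intro i j; rw [inner_sub_right]
  have hax : ⟪p, Amul A x'⟫ = ∑ i, x' i * a i := inner_Amul A p x'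
  have haz : ⟪p, Amul A z'⟫ = ∑ j, z' j * a j := inner_Amul A p z'
  have hrsum : r = ∑ i, ∑ j, (x' i * z' j) * (a i - a j) := by
    have inner_eq : ∀ i, (∑ j, (x' i * z' j) * (a i - a j))
        = x' i * a i - x' i * (∑ j, z' j * a j) := by
      intro i
      have e1 : (∑ j, (x' i * z' j) * (a i - a j))
          = (∑ j, (x' i * a i) * z' j) - (∑ j, x' i * (z' j * a j)) := by
        rw [← Finset.sum_sub_distrib]
        exact Finset.sum_congr rfl fun j _ => by ring
      rw [e1, ← Finset.mul_sum, ← Finset.mul_sum, hz'.2, mul_one]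
    rw [Finset.sum_congr rfl fun i _ => inner_eq i, Finset.sum_sub_distrib,
      ← Finset.sum_mul, hx'.2, one_mul, ← hax, ← haz, ← inner_sub_right]
    exact hpw.symm
  have hrδ : r ≤ δ := by
    rw [hrsum]
    have h1 : (∑ i, ∑ j, (x' i * z' j) * (a i - a j))
        ≤ ∑ i : Fin n, ∑ j : Fin n, (x' i * z' j) * δ := by
      refine Finset.sum_le_sum fun i _ => Finset.sum_le_sum fun j _ => ?_
      rcases eq_or_lt_of_le (hx'.1 i) with h0 | hpos
      · rw [← h0]; simp
      · refine mul_le_mul_of_nonneg_left ?_ (mul_nonneg (le_of_lt hpos) (hz'.1 j))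
        rw [← hinner_sub]; exact hgen i j hpos
    refine le_trans h1 (le_of_eq ?_)
    have h2 : ∀ i, (∑ j, (x' i * z' j) * δ) = x' i * δ := by
      intro i
      have h3 : (∑ j, (x' i * z' j) * δ) = ∑ j, (x' i * δ) * z' j :=
        Finset.sum_congr rfl fun j _ => by ring
      rw [h3, ← Finset.mul_sum, hz'.2, mul_one]
    rw [Finset.sum_congr rfl fun i _ => h2 i, ← Finset.sum_mul, hx'.2, one_mul]
  have hmain : ∀ ε : ℝ, 0 < ε → setDist F (convexHull ℝ (colSet A \ F)) ≤ δ + ε := by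
    intro ε hε
    set V : Set (EuclideanSpace ℝ (Fin m)) :=
      (fun ij : Fin n × Fin n => col A ij.1 - col A ij.2) '' {ij | 0 < x' ij.1} with hVdef
    have hVfin : V.Finite := Set.Finite.image _ (Set.toFinite _)
    set C : Set (EuclideanSpace ℝ (Fin m)) := convexHull ℝ V with hCdef
    have hCconv : Convex ℝ C := convex_convexHull ℝ V
    have hCcomp : IsCompact C := hVfin.isCompact_convexHull ℝ
    have hmemV : ∀ i j : Fin n, 0 < x' i → col A i - col A j ∈ V := by
      intro i j hi; exact ⟨(i, j), hi, rfl⟩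
    have h0C : (0 : EuclideanSpace ℝ (Fin m)) ∈ C := by
      have h := hmemV i₀ i₀ hi₀
      rw [sub_self] at h
      exact subset_convexHull ℝ V h
    have hC_le : ∀ c ∈ C, ⟪p, c⟫ ≤ δ := by
      intro c hc
      refine hull_inner_le ?_ hc
      rintro v ⟨⟨i, j⟩, hij, rfl⟩
      exact hgen i j hij
    have hwsum : w = ∑ ij : Fin n × Fin n, (x' ij.1 * z' ij.2) • (col A ij.1 - col A ij.2) := by
      rw [Fintype.sum_prod_type]
      have inner_eq : ∀ i, (∑ j, (x' i * z' j) • (col A i - col A j))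
          = x' i • col A i - x' i • Amul A z' := by
        intro i
        have e1 : (∑ j, (x' i * z' j) • (col A i - col A j))
            = (∑ j, (x' i * z' j) • col A i) - (∑ j, (x' i * z' j) • col A j) := by
          rw [← Finset.sum_sub_distrib]
          exact Finset.sum_congr rfl fun j _ => smul_sub _ _ _
        rw [e1, ← Finset.sum_smul, ← Finset.mul_sum, hz'.2, mul_one]
        congr 1
        rw [Amul_eq_sum A z', Finset.smul_sum]
        exact Finset.sum_congr rfl fun j _ => by rw [smul_smul]
      rw [Finset.sum_congr rfl fun i _ => inner_eq i, Finset.sum_sub_distrib,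
        ← Finset.sum_smul, hx'.2, one_smul, ← Amul_eq_sum]
    have hwC : w ∈ C := by
      rw [hwsum]
      rw [show (∑ ij : Fin n × Fin n, (x' ij.1 * z' ij.2) • (col A ij.1 - col A ij.2))
          = ∑ ij ∈ Finset.univ.filter (fun ij : Fin n × Fin n => x' ij.1 * z' ij.2 ≠ 0),
            (x' ij.1 * z' ij.2) • (col A ij.1 - col A ij.2) by
        refine (Finset.sum_subset (Finset.subset_univ _) ?_).symm
        intro ij _ hij
        simp only [Finset.mem_filter, Finset.mem_univ, true_and, not_not] at hij
        rw [hij, zero_smul]]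
      refine hCconv.sum_mem (fun ij _ => mul_nonneg (hx'.1 _) (hz'.1 _)) ?_ ?_
      · rw [Finset.sum_subset (Finset.subset_univ _) (fun ij _ hij => by
          simp only [Finset.mem_filter, Finset.mem_univ, true_and, not_not] at hij
          exact hij)]
        rw [Fintype.sum_prod_type]
        have h2 : ∀ i, (∑ j, x' i * z' j) = x' i := by
          intro i; rw [← Finset.mul_sum, hz'.2, mul_one]
        rw [Finset.sum_congr rfl fun i _ => h2 i, hx'.2]
      · intro ij hij
        simp only [Finset.mem_filter, Finset.mem_univ, true_and] at hij
        have hxi : 0 < x' ij.1 := by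
          rcases eq_or_lt_of_le (hx'.1 ij.1) with h0 | h
          · exact absurd (by rw [← h0, zero_mul]) hij
          · exact h
        exact subset_convexHull ℝ V (hmemV ij.1 ij.2 hxi)
    set v₀ : EuclideanSpace ℝ (Fin m) := (δ + ε) • u with hv₀def
    have hv₀C : v₀ ∉ C := by
      intro hmem
      have h := hC_le v₀ hmem
      rw [hv₀def, real_inner_smul_right, hpu, mul_one] at h
      linarith
    obtain ⟨π, hπC, hproj⟩ := proj_lemma hCconv hCcomp ⟨0, h0C⟩ v₀
    set q : EuclideanSpace ℝ (Fin m) := v₀ - π with hqdef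
    have hqne : q ≠ 0 := sub_ne_zero.mpr (fun h => hv₀C (h ▸ hπC))
    have hsupp : ∀ c ∈ C, ⟪q, c⟫ ≤ ⟪q, π⟫ := by
      intro c hc
      have h := hproj c hc
      rw [inner_sub_right] at h
      linarith
    have hqv₀ : ⟪q, π⟫ < ⟪q, v₀⟫ := by
      have h1 : ⟪q, v₀ - π⟫ = ‖q‖ ^ 2 := by rw [← hqdef, real_inner_self_eq_norm_sq]
      rw [inner_sub_right] at h1
      have h2 : 0 < ‖q‖ ^ 2 := by
        have := norm_pos_iff.mpr hqne
        positivity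
      linarith
    have hqw : ⟪q, w⟫ ≤ ⟪q, π⟫ := hsupp w hwC
    have hwu : w = r • u := by
      rw [hudef, smul_smul, mul_inv_cancel₀ (ne_of_gt hr), one_smul]
    have hqwu : ⟪q, w⟫ = r * ⟪q, u⟫ := by rw [hwu]; exact real_inner_smul_right q u r
    have hqv₀u : ⟪q, v₀⟫ = (δ + ε) * ⟪q, u⟫ := real_inner_smul_right q u (δ + ε)
    have hqu_pos : 0 < ⟪q, u⟫ := by
      have h1 : r * ⟪q, u⟫ < (δ + ε) * ⟪q, u⟫ := by
        rw [← hqwu, ← hqv₀u]; linarith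
      by_contra hle
      push_neg at hle
      have h2 : (δ + ε) * ⟪q, u⟫ ≤ r * ⟪q, u⟫ :=
        mul_le_mul_of_nonpos_right (by linarith) hle
      linarith
    set b : Fin n → ℝ := fun j => ⟪q, col A j⟫ with hbdef
    obtain ⟨jg, _, hjg⟩ := Finset.exists_min_image Finset.univ b ⟨i₀, Finset.mem_univ _⟩
    set suppx : Finset (Fin n) := Finset.univ.filter (fun i => 0 < x' i) with hsuppxdef
    have hsuppne : suppx.Nonempty := ⟨i₀, by simp [hsuppxdef, hi₀]⟩
    obtain ⟨iM, hiMmem, hiM⟩ := Finset.exists_max_image suppx b hsuppne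
    set M : ℝ := b iM with hMdef
    set g : ℝ := b jg with hgdef
    have hgle : ∀ j, g ≤ b j := fun j => hjg j (Finset.mem_univ j)
    have hMge : ∀ i, 0 < x' i → b i ≤ M := fun i hi => hiM i (by simp [hsuppxdef, hi])
    have hiMx : 0 < x' iM := by
      have := hiMmem
      simp only [hsuppxdef, Finset.mem_filter, Finset.mem_univ, true_and] at this
      exact this
    have hα : M - g ≤ ⟪q, π⟫ := by
      have h := hsupp _ (subset_convexHull ℝ V (hmemV iM jg hiMx))
      rwa [inner_sub_right] at h
    obtain ⟨μ, hμ0, hμ1, hμs, hπrep⟩ := exists_convex_rep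
      (fun ij : Fin n × Fin n => col A ij.1 - col A ij.2) {ij | 0 < x' ij.1} (hCdef ▸ hπC)
    set s₀ : EuclideanSpace ℝ (Fin m) := ∑ ij : Fin n × Fin n, μ ij • col A ij.1 with hs₀def
    set a₀ : EuclideanSpace ℝ (Fin m) := ∑ ij : Fin n × Fin n, μ ij • col A ij.2 with ha₀def
    have hπsa : π = s₀ - a₀ := by
      rw [hπrep, ← Finset.sum_sub_distrib]
      exact Finset.sum_congr rfl fun ij _ => smul_sub _ _ _
    have hqs₀ : ⟪q, s₀⟫ = ∑ ij : Fin n × Fin n, μ ij * b ij.1 := by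
      rw [hs₀def, inner_sum]
      exact Finset.sum_congr rfl fun ij _ => real_inner_smul_right q _ (μ ij)
    have hqa₀ : ⟪q, a₀⟫ = ∑ ij : Fin n × Fin n, μ ij * b ij.2 := by
      rw [ha₀def, inner_sum]
      exact Finset.sum_congr rfl fun ij _ => real_inner_smul_right q _ (μ ij)
    have hs₀le : ⟪q, s₀⟫ ≤ M := by
      rw [hqs₀]
      calc (∑ ij : Fin n × Fin n, μ ij * b ij.1) ≤ ∑ ij : Fin n × Fin n, μ ij * M := by
            refine Finset.sum_le_sum fun ij _ => ?_
            rcases eq_or_ne (μ ij) 0 with h0 | hne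
            · rw [h0]; simp
            · exact mul_le_mul_of_nonneg_left (hMge _ (hμs ij hne)) (hμ0 ij)
        _ = M := by rw [← Finset.sum_mul, hμ1, one_mul]
    have ha₀ge : g ≤ ⟪q, a₀⟫ := by
      rw [hqa₀]
      calc g = ∑ ij : Fin n × Fin n, μ ij * g := by rw [← Finset.sum_mul, hμ1, one_mul]
        _ ≤ ∑ ij : Fin n × Fin n, μ ij * b ij.2 :=
            Finset.sum_le_sum fun ij _ => mul_le_mul_of_nonneg_left (hgle ij.2) (hμ0 ij)
    have hqπ : ⟪q, π⟫ = ⟪q, s₀⟫ - ⟪q, a₀⟫ := by rw [hπsa, inner_sub_right]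
    have hs₀eq : ⟪q, s₀⟫ = M := by linarith
    have ha₀eq : ⟪q, a₀⟫ = g := by linarith
    have hgM : g < M := by
      have h1 : 0 < r * ⟪q, u⟫ := mul_pos hr hqu_pos
      linarith
    set hull : Set (EuclideanSpace ℝ (Fin m)) := convexHull ℝ (colSet A) with hhulldef
    set l : EuclideanSpace ℝ (Fin m) →L[ℝ] ℝ := innerSL ℝ (-q) with hldef
    set G : Set (EuclideanSpace ℝ (Fin m)) := {y ∈ hull | ∀ y' ∈ hull, l y' ≤ l y} with hGdef
    have hGexp : IsExposed ℝ hull G := fun _ => ⟨l, rfl⟩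
    have hcol_hull : ∀ j, col A j ∈ hull := fun j => subset_convexHull _ _ ⟨j, rfl⟩
    have hhull_ge : ∀ y ∈ hull, g ≤ ⟪q, y⟫ := by
      intro y hy
      refine hull_inner_ge ?_ hy
      rintro c ⟨j, rfl⟩
      exact hgle j
    have hlval : ∀ y : EuclideanSpace ℝ (Fin m), l y = -⟪q, y⟫ := by
      intro y; rw [hldef, innerSL_apply_apply, inner_neg_left]
    have hmemG : ∀ y, y ∈ hull → ⟪q, y⟫ = g → y ∈ G := by
      intro y hy hqy
      refine ⟨hy, fun y' hy' => ?_⟩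
      rw [hlval, hlval, hqy]
      have := hhull_ge y' hy'
      linarith
    have hGval : ∀ y ∈ G, ⟪q, y⟫ = g := by
      rintro y ⟨hy, hmax⟩
      have h1 := hmax _ (hcol_hull jg)
      rw [hlval, hlval] at h1
      have h2 := hhull_ge y hy
      have h3 : ⟪q, col A jg⟫ = b jg := rfl
      rw [h3, ← hgdef] at h1
      linarith
    have ha₀hull : a₀ ∈ hull := by
      rw [ha₀def]
      exact (convex_convexHull ℝ _).sum_mem (fun ij _ => hμ0 ij) hμ1
        (fun ij _ => hcol_hull ij.2)
    have ha₀G : a₀ ∈ G := hmemG a₀ ha₀hull ha₀eq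
    have hGne : G.Nonempty := ⟨a₀, ha₀G⟩
    have hGproper : G ≠ hull := by
      intro h
      have hmem : col A iM ∈ G := by rw [h]; exact hcol_hull iM
      have h1 := hGval _ hmem
      have hbiM : ⟪q, col A iM⟫ = b iM := rfl
      rw [hbiM, ← hMdef] at h1
      linarith
    have hcolM : ∀ ij : Fin n × Fin n, μ ij ≠ 0 → b ij.1 = M := by
      intro ij hne
      have hmemf : ij ∈ Finset.univ.filter (fun ij : Fin n × Fin n => μ ij ≠ 0) := by
        simp only [Finset.mem_filter, Finset.mem_univ, true_and]; exact hne
      refine avg_lemma _ μ (fun ij : Fin n × Fin n => b ij.1)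
        (fun ij _ => hμ0 ij) (fun ij hij => ?_) ?_ ij hmemf hne
      · simp only [Finset.mem_filter, Finset.mem_univ, true_and] at hij
        exact hMge _ (hμs ij hij)
      · have e1 : (∑ ij ∈ Finset.univ.filter (fun ij : Fin n × Fin n => μ ij ≠ 0), μ ij * b ij.1)
            = ∑ ij : Fin n × Fin n, μ ij * b ij.1 :=
          Finset.sum_subset (Finset.subset_univ _) (fun ij _ hij => by
            simp only [Finset.mem_filter, Finset.mem_univ, true_and, not_not] at hij
            rw [hij, zero_mul])
        have e2 : (∑ ij ∈ Finset.univ.filter (fun ij : Fin n × Fin n => μ ij ≠ 0), μ ij)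
            = ∑ ij : Fin n × Fin n, μ ij :=
          Finset.sum_subset (Finset.subset_univ _) (fun ij _ hij => by
            simp only [Finset.mem_filter, Finset.mem_univ, true_and, not_not] at hij
            exact hij)
        rw [e1, e2, hμ1, one_mul, ← hqs₀, hs₀eq]
    have hs₀mem : s₀ ∈ convexHull ℝ (colSet A \ G) := by
      rw [hs₀def]
      rw [show (∑ ij : Fin n × Fin n, μ ij • col A ij.1)
          = ∑ ij ∈ Finset.univ.filter (fun ij : Fin n × Fin n => μ ij ≠ 0), μ ij • col A ij.1 by
        refine (Finset.sum_subset (Finset.subset_univ _) ?_).symm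
        intro ij _ hij
        simp only [Finset.mem_filter, Finset.mem_univ, true_and, not_not] at hij
        rw [hij, zero_smul]]
      refine (convex_convexHull ℝ _).sum_mem (fun ij _ => hμ0 ij) ?_ ?_
      · rw [Finset.sum_subset (Finset.subset_univ _) (fun ij _ hij => by
          simp only [Finset.mem_filter, Finset.mem_univ, true_and, not_not] at hij
          exact hij)]
        exact hμ1
      · intro ij hij
        simp only [Finset.mem_filter, Finset.mem_univ, true_and] at hij
        refine subset_convexHull ℝ _ ⟨⟨ij.1, rfl⟩, ?_⟩
        intro hG
        have h1 := hGval _ hG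
        have h2 : b ij.1 = M := hcolM ij hij
        have : ⟪q, col A ij.1⟫ = b ij.1 := rfl
        linarith
    have hdist : setDist G (convexHull ℝ (colSet A \ G)) ≤ ‖π‖ := by
      have h := setDist_le ha₀G hs₀mem
      rw [dist_eq_norm, show a₀ - s₀ = -π from by rw [hπsa]; abel, norm_neg] at h
      exact h
    have hπle : ‖π‖ ≤ δ + ε := by
      have hobt := hproj 0 h0C
      rw [zero_sub, inner_neg_right] at hobt
      have h1 : ‖π‖ ^ 2 ≤ ⟪v₀, π⟫ := by
        have h2 : ⟪q, π⟫ = ⟪v₀, π⟫ - ⟪π, π⟫ := by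
          rw [hqdef]; exact inner_sub_left v₀ π π
        have h3 : ⟪π, π⟫ = ‖π‖ ^ 2 := real_inner_self_eq_norm_sq π
        linarith
      have h2 : ⟪v₀, π⟫ ≤ ‖v₀‖ * ‖π‖ := real_inner_le_norm v₀ π
      have hδε : 0 < δ + ε := by linarith
      have hv₀norm : ‖v₀‖ = δ + ε := by
        rw [hv₀def, norm_smul, hu1, mul_one]
        exact abs_of_pos hδε
      rcases eq_or_lt_of_le (norm_nonneg π) with h0 | hpos
      · rw [← h0]; linarith
      · nlinarith [hpos, h1, h2, hv₀norm]
    calc setDist F (convexHull ℝ (colSet A \ F))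
        ≤ setDist G (convexHull ℝ (colSet A \ G)) := hFmin G hGexp hGne hGproper
      _ ≤ ‖π‖ := hdist
      _ ≤ δ + ε := hπle
  exact le_of_forall_pos_le_add hmain

set_option maxHeartbeats 1000000 in
/-- If a proper nonempty face `F` of `conv(A)` minimizes `dist(F, conv(A \\ F))`, then there
exist `x, z ∈ Δ_{n-1}` with `Az ∈ F`, `Ax ∈ conv(A \\ F)` such that for
`p = A(x-z)/‖A(x-z)‖` one has `Φ(A) = Φ(A,x,z) = max_{s∈S(x),a∈A} ⟨p, s-a⟩ = ‖A(x-z)‖`. -/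
theorem phiTotal_attained {m n : ℕ} (A : Matrix (Fin m) (Fin n) ℝ)
    (hcols : ∃ j j' : Fin n, col A j ≠ col A j')
    (F : Set (EuclideanSpace ℝ (Fin m)))
    (hF : IsExposed ℝ (convexHull ℝ (colSet A)) F) (hFne : F.Nonempty)
    (hFproper : F ≠ convexHull ℝ (colSet A))
    (hFmin : ∀ G : Set (EuclideanSpace ℝ (Fin m)),
      IsExposed ℝ (convexHull ℝ (colSet A)) G → G.Nonempty →
      G ≠ convexHull ℝ (colSet A) →
      setDist F (convexHull ℝ (colSet A \ F)) ≤ setDist G (convexHull ℝ (colSet A \ G))) :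
    ∃ x ∈ stdSimplex ℝ (Fin n), ∃ z ∈ stdSimplex ℝ (Fin n),
      Amul A z ∈ F ∧ Amul A x ∈ convexHull ℝ (colSet A \ F) ∧
      Amul A x - Amul A z ≠ 0 ∧
      phiTotal A = phi A x z ∧
      phi A x z = maxGap A x ((‖Amul A x - Amul A z‖)⁻¹ • (Amul A x - Amul A z)) ∧
      maxGap A x ((‖Amul A x - Amul A z‖)⁻¹ • (Amul A x - Amul A z)) =
        ‖Amul A x - Amul A z‖ := by
  classical
  obtain ⟨l, hFeq⟩ := hF hFne
  set hull : Set (EuclideanSpace ℝ (Fin m)) := convexHull ℝ (colSet A) with hhulldef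
  have hcolfin : (colSet A).Finite := by
    apply Set.Finite.subset (Set.finite_range (col A))
    rintro a ⟨j, rfl⟩
    exact ⟨j, rfl⟩
  have hcol_hull : ∀ j, col A j ∈ hull := fun j => subset_convexHull _ _ ⟨j, rfl⟩
  have hhullcomp : IsCompact hull := hcolfin.isCompact_convexHull ℝ
  have hFsub : F ⊆ hull := by rw [hFeq]; exact fun y hy => hy.1
  have hFconv : Convex ℝ F := hF.convex (convex_convexHull ℝ _)
  have hFcomp : IsCompact F := by
    refine hhullcomp.of_isClosed_subset ?_ hFsub
    rw [hFeq]
    have heq : {x ∈ hull | ∀ y ∈ hull, l y ≤ l x}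
        = hull ∩ ⋂ y ∈ hull, {x | l y ≤ l x} := by
      ext w
      simp only [Set.mem_setOf_eq, Set.mem_inter_iff, Set.mem_iInter, Set.sep_setOf]
    rw [heq]
    exact hhullcomp.isClosed.inter
      (isClosed_biInter fun y _ => isClosed_le continuous_const l.continuous)
  obtain ⟨y₀, hy₀F⟩ := hFne
  set L : ℝ := l y₀ with hLdef
  have hy₀mem : y₀ ∈ {x ∈ hull | ∀ y ∈ hull, l y ≤ l x} := by rw [← hFeq]; exact hy₀F
  have hy₀max : ∀ y ∈ hull, l y ≤ L := hy₀mem.2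
  have hFval : ∀ y ∈ F, l y = L := by
    intro y hy
    have h1 : y ∈ {x ∈ hull | ∀ y' ∈ hull, l y' ≤ l x} := by rw [← hFeq]; exact hy
    exact le_antisymm (hy₀max y h1.1) (h1.2 y₀ (hFsub hy₀F))
  have hFmem : ∀ y ∈ hull, l y = L → y ∈ F := by
    intro y hy hval
    rw [hFeq]
    exact ⟨hy, fun y' hy' => by rw [hval]; exact hy₀max y' hy'⟩
  have hcolF_lt : ∀ j, col A j ∉ F → l (col A j) < L := by
    intro j hj
    rcases lt_or_eq_of_le (hy₀max _ (hcol_hull j)) with h | h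
    · exact h
    · exact absurd (hFmem _ (hcol_hull j) h) hj
  have hexF : ∃ j, col A j ∉ F := by
    by_contra h
    push_neg at h
    refine hFproper (le_antisymm hFsub (convexHull_min ?_ hFconv))
    rintro a ⟨j, rfl⟩
    exact h j
  obtain ⟨j₁, hj₁⟩ := hexF
  set Kc : Set (EuclideanSpace ℝ (Fin m)) := convexHull ℝ (colSet A \ F) with hKcdef
  have hKccomp : IsCompact Kc := (hcolfin.subset Set.diff_subset).isCompact_convexHull ℝ
  have hKcne : Kc.Nonempty := ⟨col A j₁, subset_convexHull _ _ ⟨⟨j₁, rfl⟩, hj₁⟩⟩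
  obtain ⟨f₀, hf₀F, c₀, hc₀K, hdisteq⟩ := setDist_attained hFcomp hKccomp ⟨y₀, hy₀F⟩ hKcne
  set d : ℝ := setDist F Kc with hddef
  obtain ⟨z, hzΔ, hzsupp, hAz⟩ := exists_rep A subset_rfl (hFsub hf₀F)
  obtain ⟨x, hxΔ, hxsupp, hAx⟩ := exists_rep A Set.diff_subset hc₀K
  obtain ⟨i₀, hi₀⟩ := exists_pos_of_simplex hxΔ
  obtain ⟨j₀, hj₀⟩ := exists_pos_of_simplex hzΔ
  have hsuppx_notF : ∀ j, x j ≠ 0 → col A j ∉ F := fun j hj => (hxsupp j hj).2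
  have hlc₀ : l c₀ < L := by
    rw [← hAx, clm_Amul]
    calc (∑ j, x j * l (col A j)) < ∑ j, x j * L := by
          refine Finset.sum_lt_sum (fun j _ => ?_) ⟨i₀, Finset.mem_univ _, ?_⟩
          · rcases eq_or_lt_of_le (hxΔ.1 j) with h0 | hpos
            · rw [← h0]; simp
            · refine mul_le_mul_of_nonneg_left ?_ (le_of_lt hpos)
              exact le_of_lt (hcolF_lt j (hsuppx_notF j (ne_of_gt hpos)))
          · exact mul_lt_mul_of_pos_left (hcolF_lt i₀ (hsuppx_notF i₀ (ne_of_gt hi₀))) hi₀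
      _ = L := by rw [← Finset.sum_mul, hxΔ.2, one_mul]
  have hc₀f₀ : c₀ ≠ f₀ := by
    intro h
    rw [h, hFval f₀ hf₀F] at hlc₀
    exact lt_irrefl _ hlc₀
  have hvne : Amul A x - Amul A z ≠ 0 := by
    rw [hAx, hAz]
    exact sub_ne_zero.mpr hc₀f₀
  set v : EuclideanSpace ℝ (Fin m) := Amul A x - Amul A z with hvdef
  have hvnorm_pos : 0 < ‖v‖ := norm_pos_iff.mpr hvne
  have hvd : ‖v‖ = d := by
    rw [hvdef, hAx, hAz, ← dist_eq_norm, dist_comm]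
    exact hdisteq
  set u : EuclideanSpace ℝ (Fin m) := (‖v‖)⁻¹ • v with hudef
  have hu_apply : ∀ y : EuclideanSpace ℝ (Fin m), ⟪u, y⟫ = ‖v‖⁻¹ * ⟪v, y⟫ := by
    intro y; rw [hudef]; exact real_inner_smul_left v y _
  have hunorm : ‖u‖ = 1 := by
    rw [hudef, norm_smul, norm_inv, norm_norm, inv_mul_cancel₀ (ne_of_gt hvnorm_pos)]
  have huu : ⟪u, u⟫ = 1 := by
    rw [real_inner_self_eq_norm_sq, hunorm, one_pow]
  have hAzF : Amul A z ∈ F := by rw [hAz]; exact hf₀F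
  have hAxK : Amul A x ∈ Kc := by rw [hAx]; exact hc₀K
  have hAzhull : Amul A z ∈ hull := hFsub hAzF
  have hdistAzAx : dist (Amul A z) (Amul A x) = d := by rw [hAz, hAx]; exact hdisteq
  -- variational inequality on the F side
  have hminF : ∀ w ∈ F, ‖Amul A x - Amul A z‖ ≤ ‖Amul A x - w‖ := by
    intro w hw
    rw [← dist_eq_norm, ← dist_eq_norm, dist_comm (Amul A x) (Amul A z), hdistAzAx,
      dist_comm (Amul A x) w]
    exact setDist_le hw hAxK
  have hFside : ∀ w ∈ F, ⟪v, w - Amul A z⟫ ≤ 0 := fun w hw =>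
    min_pair_inner hFconv hAzF hminF w hw
  -- variational inequality on the Kc side
  have hminK : ∀ w ∈ Kc, ‖Amul A z - Amul A x‖ ≤ ‖Amul A z - w‖ := by
    intro w hw
    rw [← dist_eq_norm, ← dist_eq_norm, hdistAzAx]
    exact setDist_le hAzF hw
  have hKside0 := min_pair_inner (convex_convexHull ℝ _) hAxK hminK
  have hAzAxneg : Amul A z - Amul A x = -v := by rw [hvdef]; abel
  have hKside : ∀ w ∈ Kc, ⟪v, Amul A x⟫ ≤ ⟪v, w⟫ := by
    intro w hw
    have h := hKside0 w hw
    rw [hAzAxneg, inner_neg_left] at h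
    have h' : 0 ≤ ⟪v, w - Amul A x⟫ := by linarith
    rw [inner_sub_right] at h'
    linarith
  set β : ℝ := ⟪u, Amul A z⟫ with hβdef
  have huv : ⟪u, v⟫ = ‖v‖ := by
    rw [hu_apply, real_inner_self_eq_norm_sq, sq, ← mul_assoc,
      inv_mul_cancel₀ (ne_of_gt hvnorm_pos), one_mul]
  have huAx : ⟪u, Amul A x⟫ = β + ‖v‖ := by
    have h : ⟪u, Amul A x - Amul A z⟫ = ⟪u, Amul A x⟫ - ⟪u, Amul A z⟫ :=
      inner_sub_right u (Amul A x) (Amul A z)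
    rw [← hvdef, huv, ← hβdef] at h
    linarith
  have hFcol_le : ∀ j, col A j ∈ F → ⟪u, col A j⟫ ≤ β := by
    intro j hj
    have h := hFside _ hj
    rw [inner_sub_right] at h
    rw [hβdef, hu_apply, hu_apply]
    exact mul_le_mul_of_nonneg_left (by linarith) (inv_nonneg.mpr (le_of_lt hvnorm_pos))
  have hnotF_ge : ∀ j, col A j ∉ F → β + ‖v‖ ≤ ⟪u, col A j⟫ := by
    intro j hj
    have h := hKside _ (subset_convexHull ℝ _ ⟨⟨j, rfl⟩, hj⟩)
    rw [← huAx, hu_apply, hu_apply]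
    exact mul_le_mul_of_nonneg_left h (inv_nonneg.mpr (le_of_lt hvnorm_pos))
  -- construction of the auxiliary face G
  obtain ⟨jm, hjmmem, hjm⟩ := Finset.exists_min_image
    (Finset.univ.filter (fun j => col A j ∉ F)) (fun j => L - l (col A j))
    ⟨j₁, by simp [hj₁]⟩
  set mg : ℝ := L - l (col A jm) with hmgdef
  have hmgpos : 0 < mg := by
    have hjm' : col A jm ∉ F := by
      simpa using hjmmem
    have := hcolF_lt jm hjm'
    rw [hmgdef]; linarith
  have hmgle : ∀ j, col A j ∉ F → mg ≤ L - l (col A j) := fun j hj => hjm j (by simp [hj])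
  obtain ⟨jM, _, hjM⟩ := Finset.exists_max_image Finset.univ
    (fun j => |⟪u, col A j⟫ - β|) ⟨j₁, Finset.mem_univ _⟩
  set mA : ℝ := |⟪u, col A jM⟫ - β| with hmAdef
  have hmA0 : 0 ≤ mA := abs_nonneg _
  have hmAge : ∀ j, |⟪u, col A j⟫ - β| ≤ mA := fun j => hjM j (Finset.mem_univ _)
  set ε : ℝ := mg / (1 + mA) with hεdef
  have hεpos : 0 < ε := div_pos hmgpos (by linarith)
  have hεmul : ε * (1 + mA) = mg := div_mul_cancel₀ _ (by positivity)
  have hkey : ∀ j, col A j ∉ F → l (col A j) + ε * ⟪u, col A j⟫ < L + ε * β := by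
    intro j hj
    have h1 : ε * (⟪u, col A j⟫ - β) ≤ ε * mA := by
      calc ε * (⟪u, col A j⟫ - β) ≤ ε * |⟪u, col A j⟫ - β| :=
            mul_le_mul_of_nonneg_left (le_abs_self _) (le_of_lt hεpos)
        _ ≤ ε * mA := mul_le_mul_of_nonneg_left (hmAge j) (le_of_lt hεpos)
    have h2 : ε * mA < mg := by nlinarith [hεmul, hεpos]
    have h3 := hmgle j hj
    have h4 : ε * (⟪u, col A j⟫ - β) = ε * ⟪u, col A j⟫ - ε * β := by ring
    rw [h4] at h1
    linarith
  set l' : EuclideanSpace ℝ (Fin m) →L[ℝ] ℝ := l + ε • innerSL ℝ u with hl'def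
  have hl'app : ∀ y, l' y = l y + ε * ⟪u, y⟫ := by
    intro y
    rw [hl'def]
    simp only [ContinuousLinearMap.add_apply, ContinuousLinearMap.coe_smul', Pi.smul_apply,
      innerSL_apply_apply, smul_eq_mul]
  set M' : ℝ := L + ε * β with hM'def
  have hcol_le' : ∀ j, l' (col A j) ≤ M' := by
    intro j
    rw [hl'app, hM'def]
    by_cases hj : col A j ∈ F
    · have h2 := hFcol_le j hj
      have h3 := mul_le_mul_of_nonneg_left h2 (le_of_lt hεpos)
      rw [hFval _ hj]
      linarith
    · exact le_of_lt (hkey j hj)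
  have hhull_le' : ∀ y ∈ hull, l' y ≤ M' := by
    intro y hy
    refine hull_clm_le l' ?_ hy
    rintro a ⟨j, rfl⟩
    exact hcol_le' j
  have hl'Az : l' (Amul A z) = M' := by
    rw [hl'app, hM'def, ← hβdef, hFval _ hAzF]
  set G : Set (EuclideanSpace ℝ (Fin m)) := {y ∈ hull | ∀ y' ∈ hull, l' y' ≤ l' y} with hGdef
  have hGexp : IsExposed ℝ hull G := fun _ => ⟨l', rfl⟩
  have hAzG : Amul A z ∈ G := ⟨hAzhull, fun y' hy' => by rw [hl'Az]; exact hhull_le' y' hy'⟩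
  have hcol_lt' : ∀ j, col A j ∉ F → l' (col A j) < M' := by
    intro j hj; rw [hl'app]; exact hkey j hj
  have hGcol_notin : ∀ j, col A j ∉ F → col A j ∉ G := by
    intro j hj hG
    have h1 := hG.2 _ hAzhull
    rw [hl'Az] at h1
    exact absurd (lt_of_lt_of_le (hcol_lt' j hj) h1) (lt_irrefl _)
  have hGproper : G ≠ hull := by
    intro h
    have hmem : col A i₀ ∈ G := by rw [h]; exact hcol_hull i₀
    exact hGcol_notin i₀ (hsuppx_notF i₀ (ne_of_gt hi₀)) hmem
  have hGcol_val : ∀ j, col A j ∈ G → ⟪u, col A j⟫ = β := by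
    intro j hG
    by_cases hjF : col A j ∈ F
    · have h1 := hG.2 _ hAzhull
      rw [hl'Az, hM'def, hl'app, hFval _ hjF] at h1
      have h2 : β ≤ ⟪u, col A j⟫ := by
        have h3 : ε * β ≤ ε * ⟪u, col A j⟫ := by linarith
        exact le_of_mul_le_mul_left h3 hεpos
      exact le_antisymm (hFcol_le j hjF) h2
    · exact absurd hG (hGcol_notin j hjF)
  set KG : Set (EuclideanSpace ℝ (Fin m)) := convexHull ℝ (colSet A \ G) with hKGdef
  have hAxKG : Amul A x ∈ KG :=
    mem_hull_of_support A hxΔ (fun j hj => ⟨⟨j, rfl⟩, hGcol_notin j (hsuppx_notF j hj)⟩)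
  have hdG : d ≤ setDist G KG := hFmin G hGexp ⟨_, hAzG⟩ hGproper
  have hminKG : ∀ w ∈ KG, ‖Amul A z - Amul A x‖ ≤ ‖Amul A z - w‖ := by
    intro w hw
    rw [← dist_eq_norm, ← dist_eq_norm, hdistAzAx]
    exact le_trans hdG (setDist_le hAzG hw)
  have hKGside := min_pair_inner (convex_convexHull ℝ _) hAxKG hminKG
  have hall_ge : ∀ j, β ≤ ⟪u, col A j⟫ := by
    intro j
    by_cases hG : col A j ∈ G
    · exact le_of_eq (hGcol_val j hG).symm
    · have h := hKGside _ (subset_convexHull ℝ _ ⟨⟨j, rfl⟩, hG⟩)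
      rw [hAzAxneg, inner_neg_left] at h
      have h' : 0 ≤ ⟪v, col A j - Amul A x⟫ := by linarith
      rw [inner_sub_right] at h'
      have h3 : ⟪u, Amul A x⟫ ≤ ⟪u, col A j⟫ := by
        rw [hu_apply, hu_apply]
        exact mul_le_mul_of_nonneg_left (by linarith) (inv_nonneg.mpr (le_of_lt hvnorm_pos))
      rw [huAx] at h3
      linarith
  have hsumux : ⟪u, Amul A x⟫ = ∑ j, x j * ⟪u, col A j⟫ := inner_Amul A u x
  have hsumuz : ⟪u, Amul A z⟫ = ∑ j, z j * ⟪u, col A j⟫ := inner_Amul A u z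
  have hsuppz_val : ∀ j, z j ≠ 0 → ⟪u, col A j⟫ = β := by
    intro j hj
    refine avg_lemma_ge Finset.univ z (fun j => ⟪u, col A j⟫)
      (fun j _ => hzΔ.1 j) (fun j _ => hall_ge j) ?_ j (Finset.mem_univ _) hj
    rw [← hsumuz, hzΔ.2, one_mul, ← hβdef]
  have hsuppx_val : ∀ j, x j ≠ 0 → ⟪u, col A j⟫ = β + ‖v‖ := by
    intro j hj
    refine avg_lemma_ge (Finset.univ.filter (fun j => x j ≠ 0)) x (fun j => ⟪u, col A j⟫)
      (fun j _ => hxΔ.1 j)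
      (fun j hjm => hnotF_ge j (hsuppx_notF j (by simpa using hjm))) ?_ j (by simpa using hj) hj
    have e1 : (∑ j ∈ Finset.univ.filter (fun j => x j ≠ 0), x j * ⟪u, col A j⟫)
        = ∑ j, x j * ⟪u, col A j⟫ := by
      refine Finset.sum_subset (Finset.subset_univ _) ?_
      intro j _ hjm
      simp only [Finset.mem_filter, Finset.mem_univ, true_and, not_not] at hjm
      rw [hjm, zero_mul]
    have e2 : (∑ j ∈ Finset.univ.filter (fun j => x j ≠ 0), x j) = ∑ j, x j := by
      refine Finset.sum_subset (Finset.subset_univ _) ?_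
      intro j _ hjm
      simp only [Finset.mem_filter, Finset.mem_univ, true_and, not_not] at hjm
      exact hjm
    rw [e1, e2, hxΔ.2, one_mul, ← hsumux, huAx]
  have hmg_eq : maxGap A x u = ‖v‖ := by
    refine le_antisymm ?_ ?_
    · refine maxGap_le A u ⟨i₀, hi₀⟩ ?_
      intro i j hi
      rw [inner_sub_right, hsuppx_val i (ne_of_gt hi)]
      have := hall_ge j
      linarith
    · have h := le_maxGap A u (i := i₀) (j := j₀) hi₀
      rw [inner_sub_right, hsuppx_val i₀ (ne_of_gt hi₀), hsuppz_val j₀ (ne_of_gt hj₀)] at h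
      linarith
  -- phi lower bound via part3
  have hphi_lb : ∀ x' z' : Fin n → ℝ, x' ∈ stdSimplex ℝ (Fin n) → z' ∈ stdSimplex ℝ (Fin n) →
      Amul A x' - Amul A z' ≠ 0 → d ≤ phi A x' z' := by
    intro x' z' hx' hz' hw
    unfold phi
    refine le_csInf ?_ ?_
    · refine ⟨maxGap A x' ((‖Amul A x' - Amul A z'‖)⁻¹ • (Amul A x' - Amul A z')),
        (‖Amul A x' - Amul A z'‖)⁻¹ • (Amul A x' - Amul A z'), ?_, rfl⟩
      have h1 : ‖(‖Amul A x' - Amul A z'‖)⁻¹ • (Amul A x' - Amul A z')‖ = 1 := by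
        rw [norm_smul, norm_inv, norm_norm,
          inv_mul_cancel₀ (ne_of_gt (norm_pos_iff.mpr hw))]
      rw [real_inner_self_eq_norm_sq, h1, one_pow]
    · rintro r ⟨p, hp, rfl⟩
      exact part3 A F hFmin hx' hz' hw p hp
  have hphixz_le : phi A x z ≤ maxGap A x u := by
    unfold phi
    refine csInf_le ⟨d, ?_⟩ ?_
    · rintro r ⟨p, hp, rfl⟩
      exact part3 A F hFmin hxΔ hzΔ hvne p hp
    · refine ⟨u, ?_, rfl⟩
      rw [← hvdef, ← hudef]
      exact huu
  have hphixz_ge : d ≤ phi A x z := hphi_lb x z hxΔ hzΔ hvne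
  have hphixz : phi A x z = d := by
    refine le_antisymm ?_ hphixz_ge
    rw [← hvd, ← hmg_eq]
    exact hphixz_le
  have hPT : phiTotal A = d := by
    unfold phiTotal
    refine le_antisymm ?_ ?_
    · have h1 : sInf {r | ∃ x ∈ stdSimplex ℝ (Fin n), ∃ z ∈ stdSimplex ℝ (Fin n),
          Amul A x - Amul A z ≠ 0 ∧ r = phi A x z} ≤ phi A x z := by
        refine csInf_le ⟨d, ?_⟩ ⟨x, hxΔ, z, hzΔ, hvne, rfl⟩
        rintro r ⟨x', hx', z', hz', hw, rfl⟩
        exact hphi_lb x' z' hx' hz' hw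
      rw [hphixz] at h1
      exact h1
    · refine le_csInf ⟨phi A x z, x, hxΔ, z, hzΔ, hvne, rfl⟩ ?_
      rintro r ⟨x', hx', z', hz', hw, rfl⟩
      exact hphi_lb x' z' hx' hz' hw
  refine ⟨x, hxΔ, z, hzΔ, hAzF, hAxK, hvne, ?_, ?_, ?_⟩
  · rw [hPT, hphixz]
  · rw [hphixz, hmg_eq, hvd]
  · exact hmg_eq
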